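/- As a formal character identity (equivalently, an identity of multisets of dominant weights for the E_6-part with a ℤ-grading in the central coordinate): the multiset ⋃_{b,e ∈ ℕ} {[0,b,0,0,e, -3b-6e+12]} ∪ (all K-types listed in the left column of Table 1, rows 2-10, for b,e ∈ ℕ, omitting entries with a negative entry among the first five coordinates) equals the multiset of all K-types listed in the right column of Table 1 (rows 1-10, same conventions) together with ⋃_{b ∈ ℕ} {[0,b,0,0,0,-3b+12]}. Equivalently, after full cancellation of rows 2-10 of Table 1 against each other and the row-1 right column against the e ≥ 1 part of the row-1 left column, only the weights [0,b,0,0,0,-3b+12] for b ∈ ℕ survive. -/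

import Mathlib

/-- The left column of Table 1 (rows 1–10), as functions of `b, e`. -/
def tblL : Fin 10 → ℤ → ℤ → (Fin 6 → ℤ) :=
  ![fun b e => ![0, b, 0, 0, e, -3*b - 6*e + 12],
    fun b e => ![1, b, 0, 0, e, -3*b - 6*e + 3],
    fun b e => ![0, b + 1, 0, 0, e - 1, -3*b - 6*e + 3],
    fun b e => ![0, b - 1, 1, 0, e - 1, -3*b - 6*e + 3],
    fun b e => ![0, b - 1, 0, 1, e, -3*b - 6*e + 3],
    fun b e => ![0, b - 1, 0, 0, e, -3*b - 6*e + 3],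
    fun b e => ![0, b, 0, 0, e + 1, -3*b - 6*e - 6],
    fun b e => ![0, b, 0, 0, e - 1, -3*b - 6*e - 6],
    fun b e => ![1, b - 1, 0, 0, e, -3*b - 6*e - 6],
    fun b e => ![0, b, 0, 1, e - 1, -3*b - 6*e - 6]]

/-- The right column of Table 1 (rows 1–10), as functions of `b, e`. -/
def tblR : Fin 10 → ℤ → ℤ → (Fin 6 → ℤ) :=
  ![fun b e => ![0, b, 0, 0, e + 1, -3*b - 6*e + 6],
    fun b e => ![1, b - 1, 0, 0, e, -3*b - 6*e + 6],
    fun b e => ![0, b + 1, 0, 0, e, -3*b - 6*e - 3],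
    fun b e => ![0, b - 1, 1, 0, e, -3*b - 6*e - 3],
    fun b e => ![0, b, 0, 1, e - 1, -3*b - 6*e + 6],
    fun b e => ![0, b, 0, 0, e - 1, -3*b - 6*e + 6],
    fun b e => ![0, b - 1, 0, 0, e + 1, -3*b - 6*e - 3],
    fun b e => ![0, b, 0, 0, e, -3*b - 6*e - 12],
    fun b e => ![1, b, 0, 0, e - 1, -3*b - 6*e - 3],
    fun b e => ![0, b - 1, 0, 1, e - 1, -3*b - 6*e - 3]]

/-- A 6-tuple is a valid `K`-type iff its first five coordinates are nonnegative
(the sixth may be any integer). -/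
def validKType (v : Fin 6 → ℤ) : Prop := ∀ i : Fin 6, i.1 < 5 → 0 ≤ v i


@[simp] lemma cons_val_five' {α : Type*} (a0 a1 a2 a3 a4 a5 : α) :
    ![a0, a1, a2, a3, a4, a5] 5 = a5 := rfl

lemma row_count (f : ℤ → ℤ → (Fin 6 → ℤ)) (a0 a2 a3 c1 c4 K : ℤ)
    (h0 : 0 ≤ a0) (h2 : 0 ≤ a2) (h3 : 0 ≤ a3)
    (hf : ∀ b e : ℤ, f b e = ![a0, b + c1, a2, a3, e + c4, -3*b - 6*e + K])
    (w : Fin 6 → ℤ) :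
    Nat.card {p : ℕ × ℕ // validKType (f p.1 p.2) ∧ f p.1 p.2 = w} =
      if w 0 = a0 ∧ w 2 = a2 ∧ w 3 = a3 ∧ 0 ≤ w 1 ∧ c1 ≤ w 1 ∧ 0 ≤ w 4 ∧ c4 ≤ w 4 ∧
         w 5 + 3 * w 1 + 6 * w 4 = K + 3 * c1 + 6 * c4 then 1 else 0 := by
  split_ifs with hc
  · rw [Nat.card_eq_one_iff_unique]
    obtain ⟨hw0, hw2, hw3, hw1a, hw1b, hw4a, hw4b, hw5⟩ := hc
    constructor
    · constructor
      rintro ⟨⟨b, e⟩, -, hbe⟩ ⟨⟨b', e'⟩, -, hbe'⟩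
      have h1 := congrFun hbe 1
      have h4 := congrFun hbe 4
      have h1' := congrFun hbe' 1
      have h4' := congrFun hbe' 4
      simp [hf] at h1 h4 h1' h4'
      have : b = b' ∧ e = e' := by omega
      simp [this.1, this.2]
    · refine ⟨⟨((w 1 - c1).toNat, (w 4 - c4).toNat), ?_, ?_⟩⟩
      · intro i hi
        revert hi
        fin_cases i <;> simp [hf] <;> omega
      · funext i
        fin_cases i <;> simp [hf] <;> omega
  · rw [Nat.card_eq_zero]
    left
    constructor
    rintro ⟨⟨b, e⟩, hv, hbe⟩
    apply hc
    rw [hbe] at hv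
    have hv1 := hv 1 (by decide)
    have hv4 := hv 4 (by decide)
    have h0' := congrFun hbe 0
    have h1 := congrFun hbe 1
    have h2' := congrFun hbe 2
    have h3' := congrFun hbe 3
    have h4 := congrFun hbe 4
    have h5 := congrFun hbe 5
    simp [hf] at h0' h1 h2' h3' h4 h5
    refine ⟨h0'.symm, h2'.symm, h3'.symm, ?_, ?_, ?_, ?_, ?_⟩ <;> omega

lemma extra_count (w : Fin 6 → ℤ) :
    Nat.card {b : ℕ // w = ![0, (b : ℤ), 0, 0, 0, -3*(b : ℤ) + 12]} =
      if w 0 = 0 ∧ w 2 = 0 ∧ w 3 = 0 ∧ 0 ≤ w 1 ∧ w 4 = 0 ∧ w 5 + 3 * w 1 = 12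
      then 1 else 0 := by
  split_ifs with hc
  · rw [Nat.card_eq_one_iff_unique]
    obtain ⟨hw0, hw2, hw3, hw1, hw4, hw5⟩ := hc
    constructor
    · constructor
      rintro ⟨b, hb⟩ ⟨b', hb'⟩
      have h1 := congrFun hb 1
      have h1' := congrFun hb' 1
      simp at h1 h1'
      have : b = b' := by omega
      simp [this]
    · refine ⟨⟨(w 1).toNat, ?_⟩⟩
      funext i
      fin_cases i <;> simp <;> omega
  · rw [Nat.card_eq_zero]
    left
    constructor
    rintro ⟨b, hb⟩
    apply hc
    have h0 := congrFun hb 0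
    have h1 := congrFun hb 1
    have h2 := congrFun hb 2
    have h3 := congrFun hb 3
    have h4 := congrFun hb 4
    have h5 := congrFun hb 5
    simp at h0 h1 h2 h3 h4 h5
    refine ⟨h0, h2, h3, ?_, h4, ?_⟩ <;> omega

lemma sum_univ_ten' {M : Type*} [AddCommMonoid M] (f : Fin 10 → M) :
    ∑ i, f i = f 0 + (f 1 + (f 2 + (f 3 + (f 4 + (f 5 + (f 6 + (f 7 + (f 8 + f 9)))))))) := by
  simp [Fin.sum_univ_succ]

lemma endgame (x0 x1 x2 x3 x4 x5 : ℤ) :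
    (if x0 = 0 ∧ x2 = 0 ∧ x3 = 0 ∧ 0 ≤ x1 ∧ 0 ≤ x1 ∧ 0 ≤ x4 ∧ 0 ≤ x4 ∧ x5 + 3 * x1 + 6 * x4 = 12 + 3 * 0 + 6 * 0 then (1:ℕ) else 0) + ((if x0 = 1 ∧ x2 = 0 ∧ x3 = 0 ∧ 0 ≤ x1 ∧ 0 ≤ x1 ∧ 0 ≤ x4 ∧ 0 ≤ x4 ∧ x5 + 3 * x1 + 6 * x4 = 3 + 3 * 0 + 6 * 0 then (1:ℕ) else 0) + ((if x0 = 0 ∧ x2 = 0 ∧ x3 = 0 ∧ 0 ≤ x1 ∧ 1 ≤ x1 ∧ 0 ≤ x4 ∧ (-1) ≤ x4 ∧ x5 + 3 * x1 + 6 * x4 = 3 + 3 * 1 + 6 * (-1) then (1:ℕ) else 0) + ((if x0 = 0 ∧ x2 = 1 ∧ x3 = 0 ∧ 0 ≤ x1 ∧ (-1) ≤ x1 ∧ 0 ≤ x4 ∧ (-1) ≤ x4 ∧ x5 + 3 * x1 + 6 * x4 = 3 + 3 * (-1) + 6 * (-1) then (1:ℕ) else 0) + ((if x0 = 0 ∧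 x2 = 0 ∧ x3 = 1 ∧ 0 ≤ x1 ∧ (-1) ≤ x1 ∧ 0 ≤ x4 ∧ 0 ≤ x4 ∧ x5 + 3 * x1 + 6 * x4 = 3 + 3 * (-1) + 6 * 0 then (1:ℕ) else 0) + ((if x0 = 0 ∧ x2 = 0 ∧ x3 = 0 ∧ 0 ≤ x1 ∧ (-1) ≤ x1 ∧ 0 ≤ x4 ∧ 0 ≤ x4 ∧ x5 + 3 * x1 + 6 * x4 = 3 + 3 * (-1) + 6 * 0 then (1:ℕ) else 0) + ((if x0 = 0 ∧ x2 = 0 ∧ x3 = 0 ∧ 0 ≤ x1 ∧ 0 ≤ x1 ∧ 0 ≤ x4 ∧ 1 ≤ x4 ∧ x5 + 3 * x1 + 6 * x4 = (-6) + 3 * 0 + 6 * 1 then (1:ℕ) else 0) + ((if x0 = 0 ∧ x2 = 0 ∧ x3 = 0 ∧ 0 ≤ x1 ∧ 0 ≤ x1 ∧ 0 ≤ x4 ∧ (-1) ≤ x4 ∧ x5 + 3 * x1 + 6 * x4 = (-6) + 3 * 0 + 6 * (-1) then (1:ℕ) else 0) + ((if x0 = 1 ∧ x2 = 0 ∧ x3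 = 0 ∧ 0 ≤ x1 ∧ (-1) ≤ x1 ∧ 0 ≤ x4 ∧ 0 ≤ x4 ∧ x5 + 3 * x1 + 6 * x4 = (-6) + 3 * (-1) + 6 * 0 then (1:ℕ) else 0) + ((if x0 = 0 ∧ x2 = 0 ∧ x3 = 1 ∧ 0 ≤ x1 ∧ 0 ≤ x1 ∧ 0 ≤ x4 ∧ (-1) ≤ x4 ∧ x5 + 3 * x1 + 6 * x4 = (-6) + 3 * 0 + 6 * (-1) then (1:ℕ) else 0)))))))))) =
      ((if x0 = 0 ∧ x2 = 0 ∧ x3 = 0 ∧ 0 ≤ x1 ∧ 0 ≤ x1 ∧ 0 ≤ x4 ∧ 1 ≤ x4 ∧ x5 + 3 * x1 + 6 * x4 = 6 + 3 * 0 + 6 * 1 then (1:ℕ) else 0) + ((if x0 = 1 ∧ x2 = 0 ∧ x3 = 0 ∧ 0 ≤ x1 ∧ (-1) ≤ x1 ∧ 0 ≤ x4 ∧ 0 ≤ x4 ∧ x5 + 3 * x1 + 6 * x4 = 6 + 3 * (-1) + 6 * 0 then (1:ℕ) else 0) + ((if x0 = 0 ∧ x2 = 0 ∧ x3 = 0 ∧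 0 ≤ x1 ∧ 1 ≤ x1 ∧ 0 ≤ x4 ∧ 0 ≤ x4 ∧ x5 + 3 * x1 + 6 * x4 = (-3) + 3 * 1 + 6 * 0 then (1:ℕ) else 0) + ((if x0 = 0 ∧ x2 = 1 ∧ x3 = 0 ∧ 0 ≤ x1 ∧ (-1) ≤ x1 ∧ 0 ≤ x4 ∧ 0 ≤ x4 ∧ x5 + 3 * x1 + 6 * x4 = (-3) + 3 * (-1) + 6 * 0 then (1:ℕ) else 0) + ((if x0 = 0 ∧ x2 = 0 ∧ x3 = 1 ∧ 0 ≤ x1 ∧ 0 ≤ x1 ∧ 0 ≤ x4 ∧ (-1) ≤ x4 ∧ x5 + 3 * x1 + 6 * x4 = 6 + 3 * 0 + 6 * (-1) then (1:ℕ) else 0) + ((if x0 = 0 ∧ x2 = 0 ∧ x3 = 0 ∧ 0 ≤ x1 ∧ 0 ≤ x1 ∧ 0 ≤ x4 ∧ (-1) ≤ x4 ∧ x5 + 3 * x1 + 6 * x4 = 6 + 3 * 0 + 6 * (-1) then (1:ℕ) else 0) + ((if x0 = 0 ∧ x2 = 0 ∧ x3 = 0 ∧ 0 ≤ x1 ∧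 (-1) ≤ x1 ∧ 0 ≤ x4 ∧ 1 ≤ x4 ∧ x5 + 3 * x1 + 6 * x4 = (-3) + 3 * (-1) + 6 * 1 then (1:ℕ) else 0) + ((if x0 = 0 ∧ x2 = 0 ∧ x3 = 0 ∧ 0 ≤ x1 ∧ 0 ≤ x1 ∧ 0 ≤ x4 ∧ 0 ≤ x4 ∧ x5 + 3 * x1 + 6 * x4 = (-12) + 3 * 0 + 6 * 0 then (1:ℕ) else 0) + ((if x0 = 1 ∧ x2 = 0 ∧ x3 = 0 ∧ 0 ≤ x1 ∧ 0 ≤ x1 ∧ 0 ≤ x4 ∧ (-1) ≤ x4 ∧ x5 + 3 * x1 + 6 * x4 = (-3) + 3 * 0 + 6 * (-1) then (1:ℕ) else 0) + ((if x0 = 0 ∧ x2 = 0 ∧ x3 = 1 ∧ 0 ≤ x1 ∧ (-1) ≤ x1 ∧ 0 ≤ x4 ∧ (-1) ≤ x4 ∧ x5 + 3 * x1 + 6 * x4 = (-3) + 3 * (-1) + 6 * (-1) then (1:ℕ) else 0))))))))))) + (if x0 = 0 ∧ x2 = 0 ∧ x3 = 0 ∧ 0 ≤ x1 ∧ x4 =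 0 ∧ x5 + 3 * x1 = 12 then (1:ℕ) else 0) := by
  have p1 : (if x0 = 1 ∧ x2 = 0 ∧ x3 = 0 ∧ 0 ≤ x1 ∧ 0 ≤ x1 ∧ 0 ≤ x4 ∧ 0 ≤ x4 ∧ x5 + 3 * x1 + 6 * x4 = 3 + 3 * 0 + 6 * 0 then (1:ℕ) else 0) = (if x0 = 1 ∧ x2 = 0 ∧ x3 = 0 ∧ 0 ≤ x1 ∧ (-1) ≤ x1 ∧ 0 ≤ x4 ∧ 0 ≤ x4 ∧ x5 + 3 * x1 + 6 * x4 = 6 + 3 * (-1) + 6 * 0 then (1:ℕ) else 0) := by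
    split_ifs <;> omega
  have p2 : (if x0 = 0 ∧ x2 = 0 ∧ x3 = 0 ∧ 0 ≤ x1 ∧ 1 ≤ x1 ∧ 0 ≤ x4 ∧ (-1) ≤ x4 ∧ x5 + 3 * x1 + 6 * x4 = 3 + 3 * 1 + 6 * (-1) then (1:ℕ) else 0) = (if x0 = 0 ∧ x2 = 0 ∧ x3 = 0 ∧ 0 ≤ x1 ∧ 1 ≤ x1 ∧ 0 ≤ x4 ∧ 0 ≤ x4 ∧ x5 + 3 * x1 + 6 * x4 = (-3) + 3 * 1 + 6 * 0 then (1:ℕ) else 0) := by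
    split_ifs <;> omega
  have p3 : (if x0 = 0 ∧ x2 = 1 ∧ x3 = 0 ∧ 0 ≤ x1 ∧ (-1) ≤ x1 ∧ 0 ≤ x4 ∧ (-1) ≤ x4 ∧ x5 + 3 * x1 + 6 * x4 = 3 + 3 * (-1) + 6 * (-1) then (1:ℕ) else 0) = (if x0 = 0 ∧ x2 = 1 ∧ x3 = 0 ∧ 0 ≤ x1 ∧ (-1) ≤ x1 ∧ 0 ≤ x4 ∧ 0 ≤ x4 ∧ x5 + 3 * x1 + 6 * x4 = (-3) + 3 * (-1) + 6 * 0 then (1:ℕ) else 0) := by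
    split_ifs <;> omega
  have p4 : (if x0 = 0 ∧ x2 = 0 ∧ x3 = 1 ∧ 0 ≤ x1 ∧ (-1) ≤ x1 ∧ 0 ≤ x4 ∧ 0 ≤ x4 ∧ x5 + 3 * x1 + 6 * x4 = 3 + 3 * (-1) + 6 * 0 then (1:ℕ) else 0) = (if x0 = 0 ∧ x2 = 0 ∧ x3 = 1 ∧ 0 ≤ x1 ∧ 0 ≤ x1 ∧ 0 ≤ x4 ∧ (-1) ≤ x4 ∧ x5 + 3 * x1 + 6 * x4 = 6 + 3 * 0 + 6 * (-1) then (1:ℕ) else 0) := by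
    split_ifs <;> omega
  have p5 : (if x0 = 0 ∧ x2 = 0 ∧ x3 = 0 ∧ 0 ≤ x1 ∧ (-1) ≤ x1 ∧ 0 ≤ x4 ∧ 0 ≤ x4 ∧ x5 + 3 * x1 + 6 * x4 = 3 + 3 * (-1) + 6 * 0 then (1:ℕ) else 0) = (if x0 = 0 ∧ x2 = 0 ∧ x3 = 0 ∧ 0 ≤ x1 ∧ 0 ≤ x1 ∧ 0 ≤ x4 ∧ (-1) ≤ x4 ∧ x5 + 3 * x1 + 6 * x4 = 6 + 3 * 0 + 6 * (-1) then (1:ℕ) else 0) := by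
    split_ifs <;> omega
  have p6 : (if x0 = 0 ∧ x2 = 0 ∧ x3 = 0 ∧ 0 ≤ x1 ∧ 0 ≤ x1 ∧ 0 ≤ x4 ∧ 1 ≤ x4 ∧ x5 + 3 * x1 + 6 * x4 = (-6) + 3 * 0 + 6 * 1 then (1:ℕ) else 0) = (if x0 = 0 ∧ x2 = 0 ∧ x3 = 0 ∧ 0 ≤ x1 ∧ (-1) ≤ x1 ∧ 0 ≤ x4 ∧ 1 ≤ x4 ∧ x5 + 3 * x1 + 6 * x4 = (-3) + 3 * (-1) + 6 * 1 then (1:ℕ) else 0) := by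
    split_ifs <;> omega
  have p7 : (if x0 = 0 ∧ x2 = 0 ∧ x3 = 0 ∧ 0 ≤ x1 ∧ 0 ≤ x1 ∧ 0 ≤ x4 ∧ (-1) ≤ x4 ∧ x5 + 3 * x1 + 6 * x4 = (-6) + 3 * 0 + 6 * (-1) then (1:ℕ) else 0) = (if x0 = 0 ∧ x2 = 0 ∧ x3 = 0 ∧ 0 ≤ x1 ∧ 0 ≤ x1 ∧ 0 ≤ x4 ∧ 0 ≤ x4 ∧ x5 + 3 * x1 + 6 * x4 = (-12) + 3 * 0 + 6 * 0 then (1:ℕ) else 0) := by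
    split_ifs <;> omega
  have p8 : (if x0 = 1 ∧ x2 = 0 ∧ x3 = 0 ∧ 0 ≤ x1 ∧ (-1) ≤ x1 ∧ 0 ≤ x4 ∧ 0 ≤ x4 ∧ x5 + 3 * x1 + 6 * x4 = (-6) + 3 * (-1) + 6 * 0 then (1:ℕ) else 0) = (if x0 = 1 ∧ x2 = 0 ∧ x3 = 0 ∧ 0 ≤ x1 ∧ 0 ≤ x1 ∧ 0 ≤ x4 ∧ (-1) ≤ x4 ∧ x5 + 3 * x1 + 6 * x4 = (-3) + 3 * 0 + 6 * (-1) then (1:ℕ) else 0) := by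
    split_ifs <;> omega
  have p9 : (if x0 = 0 ∧ x2 = 0 ∧ x3 = 1 ∧ 0 ≤ x1 ∧ 0 ≤ x1 ∧ 0 ≤ x4 ∧ (-1) ≤ x4 ∧ x5 + 3 * x1 + 6 * x4 = (-6) + 3 * 0 + 6 * (-1) then (1:ℕ) else 0) = (if x0 = 0 ∧ x2 = 0 ∧ x3 = 1 ∧ 0 ≤ x1 ∧ (-1) ≤ x1 ∧ 0 ≤ x4 ∧ (-1) ≤ x4 ∧ x5 + 3 * x1 + 6 * x4 = (-3) + 3 * (-1) + 6 * (-1) then (1:ℕ) else 0) := by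
    split_ifs <;> omega
  have p0 : (if x0 = 0 ∧ x2 = 0 ∧ x3 = 0 ∧ 0 ≤ x1 ∧ 0 ≤ x1 ∧ 0 ≤ x4 ∧ 0 ≤ x4 ∧ x5 + 3 * x1 + 6 * x4 = 12 + 3 * 0 + 6 * 0 then (1:ℕ) else 0) = (if x0 = 0 ∧ x2 = 0 ∧ x3 = 0 ∧ 0 ≤ x1 ∧ 0 ≤ x1 ∧ 0 ≤ x4 ∧ 1 ≤ x4 ∧ x5 + 3 * x1 + 6 * x4 = 6 + 3 * 0 + 6 * 1 then (1:ℕ) else 0) + (if x0 = 0 ∧ x2 = 0 ∧ x3 = 0 ∧ 0 ≤ x1 ∧ x4 = 0 ∧ x5 + 3 * x1 = 12 then (1:ℕ) else 0) := by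
    split_ifs <;> omega
  rw [p0, p1, p2, p3, p4, p5, p6, p7, p8, p9]
  ring

/-- The multiset identity behind Table 1: for every 6-tuple `w`, the number of occurrences of
`w` among the valid entries of the left column (over all rows and all `b, e ∈ ℕ`) equals the
number of occurrences of `w` among the valid entries of the right column plus the number of
occurrences of `w` among the weights `[0, b, 0, 0, 0, -3b + 12]` for `b ∈ ℕ`.  Equivalently,
after full cancellation only the weights `[0, b, 0, 0, 0, -3b + 12]`, `b ∈ ℕ`, survive on
the left. -/
theorem table1_cancellation (w : Fin 6 → ℤ) :
    (∑ r : Fin 10,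
        Nat.card {p : ℕ × ℕ // validKType (tblL r p.1 p.2) ∧ tblL r p.1 p.2 = w}) =
      (∑ r : Fin 10,
        Nat.card {p : ℕ × ℕ // validKType (tblR r p.1 p.2) ∧ tblR r p.1 p.2 = w}) +
      Nat.card {b : ℕ // w = ![0, (b : ℤ), 0, 0, 0, -3*(b : ℤ) + 12]} := by
  rw [sum_univ_ten', sum_univ_ten']
  rw [row_count (tblL 0) 0 0 0 0 0 12 (by norm_num) (by norm_num) (by norm_num)
    (fun b e => by
      have h : tblL 0 b e = ![0, b, 0, 0, e, -3*b - 6*e + 12] := rfl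
      rw [h]; funext i; fin_cases i <;> simp <;> ring) w]
  rw [row_count (tblL 1) 1 0 0 0 0 3 (by norm_num) (by norm_num) (by norm_num)
    (fun b e => by
      have h : tblL 1 b e = ![1, b, 0, 0, e, -3*b - 6*e + 3] := rfl
      rw [h]; funext i; fin_cases i <;> simp <;> ring) w]
  rw [row_count (tblL 2) 0 0 0 1 (-1) 3 (by norm_num) (by norm_num) (by norm_num)
    (fun b e => by
      have h : tblL 2 b e = ![0, b + 1, 0, 0, e - 1, -3*b - 6*e + 3] := rfl
      rw [h]; funext i; fin_cases i <;> simp <;> ring) w]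
  rw [row_count (tblL 3) 0 1 0 (-1) (-1) 3 (by norm_num) (by norm_num) (by norm_num)
    (fun b e => by
      have h : tblL 3 b e = ![0, b - 1, 1, 0, e - 1, -3*b - 6*e + 3] := rfl
      rw [h]; funext i; fin_cases i <;> simp <;> ring) w]
  rw [row_count (tblL 4) 0 0 1 (-1) 0 3 (by norm_num) (by norm_num) (by norm_num)
    (fun b e => by
      have h : tblL 4 b e = ![0, b - 1, 0, 1, e, -3*b - 6*e + 3] := rfl
      rw [h]; funext i; fin_cases i <;> simp <;> ring) w]
  rw [row_count (tblL 5) 0 0 0 (-1) 0 3 (by norm_num) (by norm_num) (by norm_num)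
    (fun b e => by
      have h : tblL 5 b e = ![0, b - 1, 0, 0, e, -3*b - 6*e + 3] := rfl
      rw [h]; funext i; fin_cases i <;> simp <;> ring) w]
  rw [row_count (tblL 6) 0 0 0 0 1 (-6) (by norm_num) (by norm_num) (by norm_num)
    (fun b e => by
      have h : tblL 6 b e = ![0, b, 0, 0, e + 1, -3*b - 6*e - 6] := rfl
      rw [h]; funext i; fin_cases i <;> simp <;> ring) w]
  rw [row_count (tblL 7) 0 0 0 0 (-1) (-6) (by norm_num) (by norm_num) (by norm_num)
    (fun b e => by
      have h : tblL 7 b e = ![0, b, 0, 0, e - 1, -3*b - 6*e - 6] := rfl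
      rw [h]; funext i; fin_cases i <;> simp <;> ring) w]
  rw [row_count (tblL 8) 1 0 0 (-1) 0 (-6) (by norm_num) (by norm_num) (by norm_num)
    (fun b e => by
      have h : tblL 8 b e = ![1, b - 1, 0, 0, e, -3*b - 6*e - 6] := rfl
      rw [h]; funext i; fin_cases i <;> simp <;> ring) w]
  rw [row_count (tblL 9) 0 0 1 0 (-1) (-6) (by norm_num) (by norm_num) (by norm_num)
    (fun b e => by
      have h : tblL 9 b e = ![0, b, 0, 1, e - 1, -3*b - 6*e - 6] := rfl
      rw [h]; funext i; fin_cases i <;> simp <;> ring) w]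
  rw [row_count (tblR 0) 0 0 0 0 1 6 (by norm_num) (by norm_num) (by norm_num)
    (fun b e => by
      have h : tblR 0 b e = ![0, b, 0, 0, e + 1, -3*b - 6*e + 6] := rfl
      rw [h]; funext i; fin_cases i <;> simp <;> ring) w]
  rw [row_count (tblR 1) 1 0 0 (-1) 0 6 (by norm_num) (by norm_num) (by norm_num)
    (fun b e => by
      have h : tblR 1 b e = ![1, b - 1, 0, 0, e, -3*b - 6*e + 6] := rfl
      rw [h]; funext i; fin_cases i <;> simp <;> ring) w]
  rw [row_count (tblR 2) 0 0 0 1 0 (-3) (by norm_num) (by norm_num) (by norm_num)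
    (fun b e => by
      have h : tblR 2 b e = ![0, b + 1, 0, 0, e, -3*b - 6*e - 3] := rfl
      rw [h]; funext i; fin_cases i <;> simp <;> ring) w]
  rw [row_count (tblR 3) 0 1 0 (-1) 0 (-3) (by norm_num) (by norm_num) (by norm_num)
    (fun b e => by
      have h : tblR 3 b e = ![0, b - 1, 1, 0, e, -3*b - 6*e - 3] := rfl
      rw [h]; funext i; fin_cases i <;> simp <;> ring) w]
  rw [row_count (tblR 4) 0 0 1 0 (-1) 6 (by norm_num) (by norm_num) (by norm_num)
    (fun b e => by
      have h : tblR 4 b e = ![0, b, 0, 1, e - 1, -3*b - 6*e + 6] := rfl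
      rw [h]; funext i; fin_cases i <;> simp <;> ring) w]
  rw [row_count (tblR 5) 0 0 0 0 (-1) 6 (by norm_num) (by norm_num) (by norm_num)
    (fun b e => by
      have h : tblR 5 b e = ![0, b, 0, 0, e - 1, -3*b - 6*e + 6] := rfl
      rw [h]; funext i; fin_cases i <;> simp <;> ring) w]
  rw [row_count (tblR 6) 0 0 0 (-1) 1 (-3) (by norm_num) (by norm_num) (by norm_num)
    (fun b e => by
      have h : tblR 6 b e = ![0, b - 1, 0, 0, e + 1, -3*b - 6*e - 3] := rfl
      rw [h]; funext i; fin_cases i <;> simp <;> ring) w]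
  rw [row_count (tblR 7) 0 0 0 0 0 (-12) (by norm_num) (by norm_num) (by norm_num)
    (fun b e => by
      have h : tblR 7 b e = ![0, b, 0, 0, e, -3*b - 6*e - 12] := rfl
      rw [h]; funext i; fin_cases i <;> simp <;> ring) w]
  rw [row_count (tblR 8) 1 0 0 0 (-1) (-3) (by norm_num) (by norm_num) (by norm_num)
    (fun b e => by
      have h : tblR 8 b e = ![1, b, 0, 0, e - 1, -3*b - 6*e - 3] := rfl
      rw [h]; funext i; fin_cases i <;> simp <;> ring) w]
  rw [row_count (tblR 9) 0 0 1 (-1) (-1) (-3) (by norm_num) (by norm_num) (by norm_num)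
    (fun b e => by
      have h : tblR 9 b e = ![0, b - 1, 0, 1, e - 1, -3*b - 6*e - 3] := rfl
      rw [h]; funext i; fin_cases i <;> simp <;> ring) w]
  rw [extra_count]
  exact endgame (w 0) (w 1) (w 2) (w 3) (w 4) (w 5)
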